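/- Let S be the symmetric inverse monoid on Fin n (partial injective maps). For every x ∈ S, (xⁿ)⁻¹ ∘ xⁿ = xⁿ ∘ (xⁿ)⁻¹, i.e., d(xⁿ) = r(xⁿ): the domain of xⁿ equals its range. -/

import Mathlib

def ppow {n : ℕ} (x : PEquiv (Fin n) (Fin n)) : ℕ → PEquiv (Fin n) (Fin n)
  | 0 => PEquiv.refl (Fin n)
  | k + 1 => (ppow x k).trans x

namespace Reilly

open PEquiv Finset

variable {n : ℕ} (x : PEquiv (Fin n) (Fin n))

lemma ppow_add (k m : ℕ) : ppow x (k + m) = (ppow x k).trans (ppow x m) := by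
  induction m with
  | zero => simp [ppow]
  | succ m ih =>
      show (ppow x (k + m)).trans x = _
      rw [ih, PEquiv.trans_assoc]
      rfl

/-- domain of `x^k` -/
def D (k : ℕ) : Finset (Fin n) := Finset.univ.filter (fun a => (ppow x k a).isSome)

lemma mem_D {k : ℕ} {a : Fin n} : a ∈ D x k ↔ (ppow x k a).isSome := by
  simp [D]

lemma D_succ_subset (k : ℕ) : D x (k + 1) ⊆ D x k := by
  intro a ha
  rw [mem_D] at ha ⊢
  have h : ppow x (k+1) a = (ppow x k a).bind x := rfl
  rw [h] at ha
  cases hc : ppow x k a with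
  | none => rw [hc] at ha; simp at ha
  | some b => rfl

lemma mem_D_succ {k : ℕ} {a : Fin n} :
    a ∈ D x (k + 1) ↔ ∃ b, x a = some b ∧ b ∈ D x k := by
  have h1 : ppow x (k + 1) = x.trans (ppow x k) := by
    rw [Nat.add_comm, ppow_add]
    congr 1
    simp [ppow]
  rw [mem_D, h1]
  show ((x a).bind (ppow x k)).isSome ↔ _
  cases h : x a with
  | none => simp
  | some b => simp [mem_D]

lemma D_stab {k : ℕ} (h : D x k = D x (k + 1)) : D x (k + 1) = D x (k + 2) := by
  apply Finset.Subset.antisymm _ (D_succ_subset x (k+1))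
  intro a ha
  rw [mem_D_succ] at ha ⊢
  obtain ⟨b, hb, hbk⟩ := ha
  exact ⟨b, hb, h ▸ hbk⟩

lemma D_stab_all {k : ℕ} (h : D x k = D x (k + 1)) :
    ∀ m, D x (k + m) = D x (k + m + 1) := by
  intro m
  induction m with
  | zero => exact h
  | succ m ih => exact D_stab x ih

lemma D_stab_ge {k : ℕ} (h : D x k = D x (k + 1)) (m : ℕ) : D x (k + m) = D x k := by
  induction m with
  | zero => rfl
  | succ m ih => rw [← ih]; exact (D_stab_all x h m).symm

lemma exists_stab : ∃ k ≤ n, D x k = D x (k + 1) := by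
  by_contra hcon
  push_neg at hcon
  have hcard : ∀ k ≤ n, (D x (k+1)).card < (D x k).card := by
    intro k hk
    exact Finset.card_lt_card (Finset.ssubset_iff_subset_ne.2
      ⟨D_succ_subset x k, fun h => hcon k hk h.symm⟩)
  have hle : ∀ k, k ≤ n + 1 → (D x k).card ≤ n - k := by
    intro k
    induction k with
    | zero =>
        intro _
        simpa [D] using (Finset.card_filter_le _ _).trans
          (le_of_eq (Finset.card_univ.trans (Fintype.card_fin n)))
    | succ k ih =>
        intro hk
        have h1 : (D x (k+1)).card < (D x k).card := hcard k (Nat.lt_succ_iff.mp hk)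
        have h2 : (D x k).card ≤ n - k := ih (Nat.le_of_succ_le hk)
        omega
  have h1 := hle n (Nat.le_succ n)
  have h2 := hle (n+1) le_rfl
  have h3 := hcard n le_rfl
  omega

lemma D_n_eq_D_2n : D x n = D x (n + n) := by
  obtain ⟨k, hk, hstab⟩ := exists_stab x
  have e1 : D x n = D x k := by
    have := D_stab_ge x hstab (n - k)
    rwa [Nat.add_sub_cancel' hk] at this
  have e2 : D x (n + n) = D x k := by
    have := D_stab_ge x hstab (n + n - k)
    rwa [Nat.add_sub_cancel' (hk.trans (Nat.le_add_right n n))] at this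
  rw [e1, e2]

lemma maps_into {a b : Fin n} (ha : a ∈ D x n) (hb : ppow x n a = some b) :
    b ∈ D x n := by
  have h2n : a ∈ D x (n + n) := (D_n_eq_D_2n x) ▸ ha
  rw [mem_D, ppow_add] at h2n
  have he : (ppow x n).trans (ppow x n) a = (ppow x n a).bind (ppow x n) := rfl
  rw [he, hb] at h2n
  rwa [mem_D]

lemma ran_subset {a b : Fin n} (hb : ppow x n b = some a) : a ∈ D x n := by
  have hbD : b ∈ D x n := (mem_D x).2 (by rw [hb]; rfl)
  exact maps_into x hbD hb

lemma surj {a : Fin n} (ha : a ∈ D x n) : ∃ b, ppow x n b = some a := by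
  set f := ppow x n with hf
  have key := Finset.surj_on_of_inj_on_of_card_le (s := D x n) (t := D x n)
    (fun b hb => (f b).get ((mem_D x).mp hb))
    (fun b hb => maps_into x hb (Option.some_get _).symm)
    (fun b₁ b₂ hb₁ hb₂ heq => by
      have e1 : f b₁ = some ((f b₁).get ((mem_D x).mp hb₁)) := (Option.some_get _).symm
      have e2 : f b₂ = some ((f b₂).get ((mem_D x).mp hb₂)) := (Option.some_get _).symm
      rw [heq] at e1
      have h1 := (f.eq_some_iff).2 e1
      have h2 := (f.eq_some_iff).2 e2
      exact Option.some_inj.mp (h1.symm.trans h2))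
    le_rfl
  obtain ⟨b, hb, hbe⟩ := key a ha
  exact ⟨b, by rw [hbe]; exact (Option.some_get _).symm⟩

end Reilly

/-- Reilly's identity for index `n` in the symmetric inverse monoid on `Fin n`:
`d(xⁿ) = r(xⁿ)`, i.e. `(xⁿ)⁻¹ ∘ xⁿ = xⁿ ∘ (xⁿ)⁻¹` for every partial injective
map `x` on an `n`-element set. -/
theorem stmt17 (n : ℕ) (x : PEquiv (Fin n) (Fin n)) :
    (ppow x n).trans (ppow x n).symm = (ppow x n).symm.trans (ppow x n) := by
  apply PEquiv.ext
  intro a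
  set f := ppow x n with hf
  cases h : f a with
  | some c =>
      have lhs : (f.trans f.symm) a = some a :=
        (PEquiv.trans_eq_some _ _ _ _).2 ⟨c, h, (f.eq_some_iff).2 h⟩
      obtain ⟨b, hb⟩ := Reilly.surj x ((Reilly.mem_D x).2 (by rw [h]; rfl))
      have hsymm : f.symm a = some b := (f.eq_some_iff).2 hb
      have rhs : (f.symm.trans f) a = some a :=
        (PEquiv.trans_eq_some _ _ _ _).2 ⟨b, hsymm, hb⟩
      rw [lhs, rhs]
  | none =>
      have lhs : (f.trans f.symm) a = none := by
        have : (f.trans f.symm) a = (f a).bind f.symm := rfl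
        rw [this, h]; rfl
      have hsn : f.symm a = none := by
        cases h2 : f.symm a with
        | none => rfl
        | some b =>
            have hb : f b = some a := (f.eq_some_iff).1 h2
            have : a ∈ Reilly.D x n := Reilly.ran_subset x hb
            rw [Reilly.mem_D, ← hf, h] at this
            simp at this
      have rhs : (f.symm.trans f) a = none := by
        have : (f.symm.trans f) a = (f.symm a).bind f := rfl
        rw [this, hsn]; rfl
      rw [lhs, rhs]
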